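/- arXiv:1009.1732 — 5 statements merged into one kernel-verified Lean document; each statement's English description precedes it below -/
import Mathlib

section
/- For a Pólya urn, the proportion of black balls Z_t = b_t/(w_t + b_t) converges almost surely as t → ∞ to a random variable Θ. -/
open Finset MeasureTheory ProbabilityTheory

/-- White weight of the Pólya urn after the draws `x 0, …, x (t-1)`
(`x i = true` means the `i`-th draw was black). -/
noncomputable def polyaW (w0 s : ℝ) (x : ℕ → Bool) : ℕ → ℝ
  | 0 => w0
  | t + 1 => polyaW w0 s x t + if x t then 0 else s

/-- Black weight of the Pólya urn after the draws `x 0, …, x (t-1)`. -/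
noncomputable def polyaB (b0 s : ℝ) (x : ℕ → Bool) : ℕ → ℝ
  | 0 => b0
  | t + 1 => polyaB b0 s x t + if x t then s else 0

/-- Joint probability that the first `n` draws of the Pólya urn are
`x 0, …, x (n-1)`. -/
noncomputable def polyaJoint (w0 b0 s : ℝ) (x : ℕ → Bool) (n : ℕ) : ℝ :=
  ∏ t ∈ range n,
    (if x t then polyaB b0 s x t else polyaW w0 s x t) /
      (polyaW w0 s x t + polyaB b0 s x t)

/-! The proportion `Z_t` is a martingale for the filtration generated by the draws: conditionally
on the first `t` draws, `Z_{t+1}` equals `(b + s)/(T + s)` with probability `b/T` and `b/(T + s)`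
with probability `w/T`, where `T = w + b`, and these average to `b/T = Z_t`. Being bounded in
`[0, 1]`, it converges almost surely by Doob's martingale convergence theorem. -/

lemma Function.FactorsThrough.measurable_comap {X Y Z : Type*} [mY : MeasurableSpace Y]
    [DiscreteMeasurableSpace Y] [MeasurableSpace Z] {f : X → Y} {g : X → Z}
    (h : g.FactorsThrough f) : Measurable[mY.comap f] g := fun U _ =>
  ⟨f '' (g ⁻¹' U), .of_discrete, by
    ext x
    exact ⟨fun ⟨x', hx', hfx⟩ => show g x ∈ U from h hfx ▸ hx', fun hx => ⟨x, hx, rfl⟩⟩⟩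

lemma setIntegral_eq_of_forall_preimage_singleton {Ω α E : Type*} {mΩ : MeasurableSpace Ω}
    {μ : Measure Ω} [NormedAddCommGroup E] [NormedSpace ℝ E] [Countable α] [MeasurableSpace α]
    [MeasurableSingletonClass α] {Y : Ω → α} (hY : Measurable Y) {f g : Ω → E}
    (hf : Integrable f μ) (hg : Integrable g μ)
    (hfg : ∀ a, ∫ ω in Y ⁻¹' {a}, f ω ∂μ = ∫ ω in Y ⁻¹' {a}, g ω ∂μ) {t : Set Ω}
    (ht : MeasurableSet[MeasurableSpace.comap Y inferInstance] t) :
    ∫ ω in t, f ω ∂μ = ∫ ω in t, g ω ∂μ := by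
  obtain ⟨S, -, rfl⟩ := ht
  have hS : Y ⁻¹' S = ⋃ a : S, Y ⁻¹' {(a : α)} := by ext; simp
  have hdisj : Pairwise (Function.onFun Disjoint fun a : S => Y ⁻¹' {(a : α)}) := fun a b hab =>
    (Set.disjoint_singleton.2 (Subtype.coe_injective.ne hab)).preimage Y
  have hmeas (a : S) : MeasurableSet (Y ⁻¹' {(a : α)}) := hY (measurableSet_singleton _)
  rw [hS, integral_iUnion hmeas hdisj hf.integrableOn,
    integral_iUnion hmeas hdisj hg.integrableOn]
  exact tsum_congr fun a => hfg a

section Urn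

variable {w0 b0 s : ℝ}

lemma polyaW_congr {x y : ℕ → Bool} {n : ℕ} (h : ∀ i < n, x i = y i) :
    polyaW w0 s x n = polyaW w0 s y n := by
  induction n with
  | zero => rfl
  | succ n ih => simp only [polyaW, ih fun i hi => h i (by omega), h n (by omega)]

lemma polyaB_congr {x y : ℕ → Bool} {n : ℕ} (h : ∀ i < n, x i = y i) :
    polyaB b0 s x n = polyaB b0 s y n := by
  induction n with
  | zero => rfl
  | succ n ih => simp only [polyaB, ih fun i hi => h i (by omega), h n (by omega)]

lemma polyaJoint_congr {x y : ℕ → Bool} {n : ℕ} (h : ∀ i < n, x i = y i) :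
    polyaJoint w0 b0 s x n = polyaJoint w0 b0 s y n :=
  prod_congr rfl fun t ht => by
    have ht : t < n := mem_range.1 ht
    rw [polyaW_congr fun i hi => h i (by omega), polyaB_congr fun i hi => h i (by omega), h t ht]

lemma polyaW_eq_sum (x : ℕ → Bool) (n : ℕ) :
    polyaW w0 s x n = w0 + s * ∑ i ∈ range n, (1 - if x i then (1 : ℝ) else 0) := by
  induction n with
  | zero => simp [polyaW]
  | succ n ih =>
    rw [polyaW, ih, sum_range_succ]
    cases x n <;> simp only [if_true, if_false, Bool.false_eq_true] <;> ring

lemma polyaB_eq_sum (x : ℕ → Bool) (n : ℕ) :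
    polyaB b0 s x n = b0 + s * ∑ i ∈ range n, (if x i then (1 : ℝ) else 0) := by
  induction n with
  | zero => simp [polyaB]
  | succ n ih =>
    rw [polyaB, ih, sum_range_succ]
    cases x n <;> simp only [if_true, if_false, Bool.false_eq_true] <;> ring

lemma polyaW_pos (hw : 0 < w0) (hs : 0 ≤ s) (x : ℕ → Bool) (n : ℕ) : 0 < polyaW w0 s x n := by
  induction n with
  | zero => exact hw
  | succ n ih => rw [polyaW]; split_ifs <;> linarith

lemma polyaB_pos (hb : 0 < b0) (hs : 0 ≤ s) (x : ℕ → Bool) (n : ℕ) : 0 < polyaB b0 s x n := by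
  induction n with
  | zero => exact hb
  | succ n ih => rw [polyaB]; split_ifs <;> linarith

lemma polyaJoint_nonneg (hw : 0 < w0) (hb : 0 < b0) (hs : 0 ≤ s) (x : ℕ → Bool) (n : ℕ) :
    0 ≤ polyaJoint w0 b0 s x n :=
  prod_nonneg fun t _ => by
    have := polyaW_pos hw hs x t
    have := polyaB_pos hb hs x t
    cases x t <;> simp only [Bool.false_eq_true, if_true, if_false] <;> positivity

lemma polyaW_update_succ (x : ℕ → Bool) (n : ℕ) (b : Bool) :
    polyaW w0 s (Function.update x n b) (n + 1) = polyaW w0 s x n + if b then 0 else s := by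
  rw [polyaW, polyaW_congr fun i hi => Function.update_of_ne hi.ne _ _, Function.update_self]

lemma polyaB_update_succ (x : ℕ → Bool) (n : ℕ) (b : Bool) :
    polyaB b0 s (Function.update x n b) (n + 1) = polyaB b0 s x n + if b then s else 0 := by
  rw [polyaB, polyaB_congr fun i hi => Function.update_of_ne hi.ne _ _, Function.update_self]

lemma polyaJoint_update_succ (x : ℕ → Bool) (n : ℕ) (b : Bool) :
    polyaJoint w0 b0 s (Function.update x n b) (n + 1) =
      polyaJoint w0 b0 s x n * ((if b then polyaB b0 s x n else polyaW w0 s x n) /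
        (polyaW w0 s x n + polyaB b0 s x n)) := by
  have hx : ∀ i < n, Function.update x n b i = x i := fun i hi => Function.update_of_ne hi.ne _ _
  rw [polyaJoint, prod_range_succ, ← polyaJoint, polyaJoint_congr hx, polyaW_congr hx,
    polyaB_congr hx, Function.update_self]

noncomputable def polyaProportion (w0 b0 s : ℝ) (x : ℕ → Bool) (n : ℕ) : ℝ :=
  polyaB b0 s x n / (polyaW w0 s x n + polyaB b0 s x n)

lemma polyaProportion_congr {x y : ℕ → Bool} {n : ℕ} (h : ∀ i < n, x i = y i) :
    polyaProportion w0 b0 s x n = polyaProportion w0 b0 s y n := by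
  rw [polyaProportion, polyaProportion, polyaW_congr h, polyaB_congr h]

lemma abs_polyaProportion_le_one (hw : 0 < w0) (hb : 0 < b0) (hs : 0 ≤ s) (x : ℕ → Bool)
    (n : ℕ) : |polyaProportion w0 b0 s x n| ≤ 1 := by
  have hW := polyaW_pos hw hs x n
  have hB := polyaB_pos hb hs x n
  rw [polyaProportion, abs_of_pos (by positivity), div_le_one (by positivity)]
  linarith

lemma polyaJoint_mul_polyaProportion_succ (hw : 0 < w0) (hb : 0 < b0) (hs : 0 ≤ s)
    (x : ℕ → Bool) (n : ℕ) :
    polyaJoint w0 b0 s (Function.update x n true) (n + 1) *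
        polyaProportion w0 b0 s (Function.update x n true) (n + 1) +
      polyaJoint w0 b0 s (Function.update x n false) (n + 1) *
        polyaProportion w0 b0 s (Function.update x n false) (n + 1) =
      polyaJoint w0 b0 s x n * polyaProportion w0 b0 s x n := by
  have hW := polyaW_pos hw hs x n
  have hB := polyaB_pos hb hs x n
  simp only [polyaProportion, polyaJoint_update_succ, polyaW_update_succ, polyaB_update_succ,
    if_true, if_false, Bool.false_eq_true]
  field_simp
  ring

end Urn

section Draws

variable {Ω : Type*} {mΩ : MeasurableSpace Ω} (X : ℕ → Ω → ℝ)

noncomputable def drawPath (ω : Ω) (i : ℕ) : Bool := X i ω = 1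

noncomputable def history (n : ℕ) (ω : Ω) : Fin n → Bool := fun i => drawPath X ω i

noncomputable def blackProportion (w0 b0 s : ℝ) (n : ℕ) (ω : Ω) : ℝ :=
  (b0 + s * ∑ i ∈ range n, X i ω) /
    ((w0 + s * ∑ i ∈ range n, (1 - X i ω)) + (b0 + s * ∑ i ∈ range n, X i ω))

variable {X}

lemma mem_preimage_history {n : ℕ} {x : ℕ → Bool} {ω : Ω} :
    ω ∈ history X n ⁻¹' {fun i : Fin n => x i} ↔ ∀ t < n, drawPath X ω t = x t := by
  simp [history, funext_iff, Fin.forall_iff]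

lemma eq_ite_drawPath {i : ℕ} {ω : Ω} (h : X i ω = 0 ∨ X i ω = 1) :
    X i ω = if drawPath X ω i then 1 else 0 := by
  rcases h with h | h <;> simp [drawPath, h]

lemma setOf_eq_preimage_history (hval : ∀ t ω, X t ω = 0 ∨ X t ω = 1) (n : ℕ)
    (x : ℕ → Bool) :
    {ω | ∀ t < n, X t ω = if x t then 1 else 0} = history X n ⁻¹' {fun i : Fin n => x i} := by
  ext ω
  rw [mem_preimage_history]
  refine forall₂_congr fun t _ => ?_
  rw [eq_ite_drawPath (hval t ω)]
  cases drawPath X ω t <;> cases x t <;> norm_num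

lemma preimage_history_update_succ (n : ℕ) (x : ℕ → Bool) (b : Bool) :
    history X (n + 1) ⁻¹' {fun i : Fin (n + 1) => Function.update x n b i} =
      history X n ⁻¹' {fun i : Fin n => x i} ∩ {ω | drawPath X ω n = b} := by
  ext ω
  simp only [Set.mem_inter_iff, mem_preimage_history, Nat.forall_lt_succ_right,
    Function.update_self, Set.mem_ofPred_eq]
  refine and_congr_left fun _ => forall₂_congr fun i hi => ?_
  rw [Function.update_of_ne hi.ne]

lemma blackProportion_eq_polyaProportion (hval : ∀ t ω, X t ω = 0 ∨ X t ω = 1)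
    (w0 b0 s : ℝ) (n : ℕ) (ω : Ω) :
    blackProportion X w0 b0 s n ω = polyaProportion w0 b0 s (drawPath X ω) n := by
  simp only [blackProportion, polyaProportion, polyaW_eq_sum, polyaB_eq_sum,
    ← eq_ite_drawPath (hval _ ω)]

lemma measurable_history (hX : ∀ t, Measurable (X t)) (n : ℕ) : Measurable (history X n) :=
  measurable_pi_lambda _ fun i =>
    measurable_to_bool <| by
      convert hX i (measurableSet_singleton 1)
      ext ω
      simp [history, drawPath]

noncomputable def historyFiltration (hX : ∀ t, Measurable (X t)) : Filtration ℕ mΩ where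
  seq n := MeasurableSpace.comap (history X n) inferInstance
  mono' m n hmn := by
    have : history X m = (fun v : Fin n → Bool => fun i : Fin m => v (Fin.castLE hmn i)) ∘
        history X n := rfl
    change MeasurableSpace.comap (history X m) _ ≤ _
    rw [this, ← MeasurableSpace.comap_comp]
    exact MeasurableSpace.comap_mono Measurable.of_discrete.comap_le
  le' n := (measurable_history hX n).comap_le

end Draws

structure IsPolyaDraws {Ω : Type*} {mΩ : MeasurableSpace Ω} (P : Measure Ω)
    (w0 b0 s : ℝ) (X : ℕ → Ω → ℝ) : Prop where
  measurable : ∀ t, Measurable (X t)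
  zero_or_one : ∀ t ω, X t ω = 0 ∨ X t ω = 1
  measure_eq : ∀ (n : ℕ) (x : ℕ → Bool),
    P {ω | ∀ t < n, X t ω = if x t then 1 else 0} = ENNReal.ofReal (polyaJoint w0 b0 s x n)

namespace IsPolyaDraws

variable {Ω : Type*} {mΩ : MeasurableSpace Ω} {P : Measure Ω} {w0 b0 s : ℝ} {X : ℕ → Ω → ℝ}

lemma stronglyAdapted_blackProportion (hX : IsPolyaDraws P w0 b0 s X) :
    StronglyAdapted (historyFiltration hX.measurable) (blackProportion X w0 b0 s) := fun n =>
  Measurable.stronglyMeasurable <| Function.FactorsThrough.measurable_comap fun ω ω' h => by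
    rw [blackProportion_eq_polyaProportion hX.zero_or_one,
      blackProportion_eq_polyaProportion hX.zero_or_one]
    exact polyaProportion_congr fun i hi => congrFun h ⟨i, hi⟩

lemma norm_blackProportion_le_one (hX : IsPolyaDraws P w0 b0 s X) (hw : 0 < w0)
    (hb : 0 < b0) (hs : 0 ≤ s) (n : ℕ) (ω : Ω) : ‖blackProportion X w0 b0 s n ω‖ ≤ 1 := by
  rw [Real.norm_eq_abs, blackProportion_eq_polyaProportion hX.zero_or_one]
  exact abs_polyaProportion_le_one hw hb hs _ n

lemma integrable_blackProportion [IsFiniteMeasure P] (hX : IsPolyaDraws P w0 b0 s X)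
    (hw : 0 < w0) (hb : 0 < b0) (hs : 0 ≤ s) (n : ℕ) : Integrable (blackProportion X w0 b0 s n) P :=
  .of_bound ((hX.stronglyAdapted_blackProportion n).mono
    ((historyFiltration hX.measurable).le n)).aestronglyMeasurable 1
    (.of_forall (hX.norm_blackProportion_le_one hw hb hs n))

lemma setIntegral_blackProportion_preimage_history (hX : IsPolyaDraws P w0 b0 s X)
    (hw : 0 < w0) (hb : 0 < b0) (hs : 0 ≤ s) (n : ℕ) (x : ℕ → Bool) :
    ∫ ω in history X n ⁻¹' {fun i : Fin n => x i}, blackProportion X w0 b0 s n ω ∂P =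
      polyaJoint w0 b0 s x n * polyaProportion w0 b0 s x n := by
  have hconst : Set.EqOn (blackProportion X w0 b0 s n) (fun _ => polyaProportion w0 b0 s x n)
      (history X n ⁻¹' {fun i : Fin n => x i}) := fun ω hω => by
    rw [blackProportion_eq_polyaProportion hX.zero_or_one]
    exact polyaProportion_congr (mem_preimage_history.1 hω)
  have hmeas := measurable_history hX.measurable n (measurableSet_singleton fun i : Fin n => x i)
  rw [setIntegral_congr_fun hmeas hconst, setIntegral_const, measureReal_def,
    ← setOf_eq_preimage_history hX.zero_or_one, hX.measure_eq,
    ENNReal.toReal_ofReal (polyaJoint_nonneg hw hb hs x n), smul_eq_mul]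

lemma setIntegral_blackProportion_succ [IsFiniteMeasure P] (hX : IsPolyaDraws P w0 b0 s X)
    (hw : 0 < w0) (hb : 0 < b0) (hs : 0 ≤ s) (n : ℕ) (x : ℕ → Bool) :
    ∫ ω in history X n ⁻¹' {fun i : Fin n => x i}, blackProportion X w0 b0 s (n + 1) ω ∂P =
      ∫ ω in history X n ⁻¹' {fun i : Fin n => x i}, blackProportion X w0 b0 s n ω ∂P := by
  have hsplit : history X n ⁻¹' {fun i : Fin n => x i} =
      history X (n + 1) ⁻¹' {fun i : Fin (n + 1) => Function.update x n true i} ∪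
      history X (n + 1) ⁻¹' {fun i : Fin (n + 1) => Function.update x n false i} := by
    rw [preimage_history_update_succ, preimage_history_update_succ,
      ← Set.inter_union_distrib_left]
    ext ω
    cases drawPath X ω n <;> simp
  have hdisj : Disjoint
      (history X (n + 1) ⁻¹' {fun i : Fin (n + 1) => Function.update x n true i})
      (history X (n + 1) ⁻¹' {fun i : Fin (n + 1) => Function.update x n false i}) := by
    rw [preimage_history_update_succ, preimage_history_update_succ]
    exact Set.disjoint_left.2 fun ω h1 h2 => Bool.noConfusion (h1.2.symm.trans h2.2)
  rw [hX.setIntegral_blackProportion_preimage_history hw hb hs n x,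
    ← polyaJoint_mul_polyaProportion_succ hw hb hs, hsplit,
    setIntegral_union hdisj (measurable_history hX.measurable _ (measurableSet_singleton _))
      (hX.integrable_blackProportion hw hb hs _).integrableOn
      (hX.integrable_blackProportion hw hb hs _).integrableOn,
    hX.setIntegral_blackProportion_preimage_history hw hb hs,
    hX.setIntegral_blackProportion_preimage_history hw hb hs]

lemma martingale_blackProportion [IsFiniteMeasure P] (hX : IsPolyaDraws P w0 b0 s X)
    (hw : 0 < w0) (hb : 0 < b0) (hs : 0 ≤ s) :
    Martingale (blackProportion X w0 b0 s) (historyFiltration hX.measurable) P := by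
  refine martingale_nat hX.stronglyAdapted_blackProportion
    (hX.integrable_blackProportion hw hb hs) fun n => ?_
  refine ae_eq_condExp_of_forall_setIntegral_eq _ (hX.integrable_blackProportion hw hb hs _)
    (fun _ _ _ => (hX.integrable_blackProportion hw hb hs n).integrableOn)
    (fun t ht _ => ?_) (hX.stronglyAdapted_blackProportion n).aestronglyMeasurable
  refine (setIntegral_eq_of_forall_preimage_singleton (measurable_history hX.measurable n)
    (hX.integrable_blackProportion hw hb hs _) (hX.integrable_blackProportion hw hb hs _)
    (fun v => ?_) ht).symm
  obtain ⟨x, rfl⟩ : ∃ x : ℕ → Bool, (fun i : Fin n => x i) = v :=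
    ⟨fun i => if h : i < n then v ⟨i, h⟩ else false, by ext i; simp⟩
  exact hX.setIntegral_blackProportion_succ hw hb hs n x

lemma eLpNorm_blackProportion_le_one [IsProbabilityMeasure P] (hX : IsPolyaDraws P w0 b0 s X)
    (hw : 0 < w0) (hb : 0 < b0) (hs : 0 ≤ s) (n : ℕ) :
    eLpNorm (blackProportion X w0 b0 s n) 1 P ≤ 1 := by
  simpa using eLpNorm_le_of_ae_bound (μ := P) (p := 1)
    (.of_forall (hX.norm_blackProportion_le_one hw hb hs n))

end IsPolyaDraws

/-- For a Pólya urn process, i.e. any `{0,1}`-valued process `X` whose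
finite-dimensional distributions are the Pólya urn joint probabilities, the
proportion of black balls `Z_t = b_t / (w_t + b_t)` converges almost surely,
as `t → ∞`, to some random variable `Θ`. -/
theorem polya_proportion_converges_as
    {Ω : Type*} {mΩ : MeasurableSpace Ω} {P : Measure Ω} [IsProbabilityMeasure P]
    (w0 b0 s : ℝ) (hw : 0 < w0) (hb : 0 < b0) (hs : 0 < s)
    (X : ℕ → Ω → ℝ) (hX : ∀ t, StronglyMeasurable (X t))
    (hval : ∀ t ω, X t ω = 0 ∨ X t ω = 1)
    (hlaw : ∀ (n : ℕ) (x : ℕ → Bool),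
      P {ω | ∀ t < n, X t ω = if x t then 1 else 0} =
        ENNReal.ofReal (polyaJoint w0 b0 s x n)) :
    ∃ Θ : Ω → ℝ, ∀ᵐ ω ∂P,
      Filter.Tendsto
        (fun t =>
          (b0 + s * ∑ i ∈ range t, X i ω) /
            ((w0 + s * ∑ i ∈ range t, (1 - X i ω)) +
              (b0 + s * ∑ i ∈ range t, X i ω)))
        Filter.atTop (nhds (Θ ω)) := by
  have hdraws : IsPolyaDraws P w0 b0 s X := ⟨fun t => (hX t).measurable, hval, hlaw⟩
  have hmart := hdraws.martingale_blackProportion hw hb hs.le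
  refine ⟨fun ω => Filter.limUnder Filter.atTop fun t => blackProportion X w0 b0 s t ω, ?_⟩
  filter_upwards [hmart.submartingale.exists_ae_tendsto_of_bdd
    (hdraws.eLpNorm_blackProportion_le_one hw hb hs.le)] with ω hω
  exact tendsto_nhds_limUnder hω
end

section
/- If the compositions satisfy ∏_{j=0}^n w_j/(w_j + b_j) → 0 as n → ∞, then the reinforced urn process is recurrent: the process returns to state 0 infinitely often with probability one; in particular each ξ_i is finite almost surely. -/
open Finset

/-- Probability that a single system, facing urns whose current compositions are
`(W j white, B j black)` for each state `j`, draws white at states `0, …, r-1`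
(moving up one state after each white ball) and then black at state `r`,
i.e. that its 0-block ends at state `r`. Within one block every urn is sampled
at most once, so no reinforcement occurs inside the block. -/
noncomputable def blockProb (W B : ℕ → ℝ) (r : ℕ) : ℝ :=
  (B r / (W r + B r)) * ∏ j ∈ range r, W j / (W j + B j)

/-- Updated white compositions after observing a system that failed at state `r`:
each urn `j < r` delivered a white ball and receives `s` extra white balls. -/
noncomputable def updW (s : ℝ) (W : ℕ → ℝ) (r : ℕ) : ℕ → ℝ :=
  fun j => if j < r then W j + s else W j

/-- Updated black compositions after observing a system that failed at state `r`:
urn `r` delivered a black ball and receives `s` extra black balls. -/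
noncomputable def updB (s : ℝ) (B : ℕ → ℝ) (r : ℕ) : ℕ → ℝ :=
  fun j => if j = r then B j + s else B j

/-- Joint probability that the successive systems of the reinforced urn process
fail at the states listed in `a` : the first system fails at `a.head`, then the
urns are Pólya-reinforced, the second system fails at the next entry, etc. -/
noncomputable def jointXi (s : ℝ) (W B : ℕ → ℝ) : List ℕ → ℝ
  | [] => 1
  | r :: a => blockProb W B r * jointXi s (updW s W r) (updB s B r) a

/-!
With `ρ j = W j / (W j + B j)`, a 0-block ends at state `r` with probability
`ρ 0 ⋯ ρ (r-1) (1 - ρ r)`; these telescope, so the block ends somewhere with probability one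
exactly when the survival products `∏_{j<n} ρ j` tend to `0`. Reinforcement after a block changes
only the finitely many urns the block visited, so it multiplies the tail of the survival products
by a nonzero constant and the hypothesis passes to every later block. Hence each conditional law
of the next failure state has mass one, and summing out `ξ_m, ξ_{m-1}, …` in turn shows that the
joint law of `ξ_1, …, ξ_m` has mass one.
-/

open Filter Topology

theorem tendsto_prod_range_zero_of_eq_of_le {K : Type*} [Field K] [TopologicalSpace K]
    [ContinuousMul K] {f g : ℕ → K} {N : ℕ} (hfg : ∀ j, N ≤ j → f j = g j)
    (hg : ∀ j < N, g j ≠ 0) (h : Tendsto (fun n => ∏ j ∈ range n, g j) atTop (𝓝 0)) :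
    Tendsto (fun n => ∏ j ∈ range n, f j) atTop (𝓝 0) := by
  set c := (∏ j ∈ range N, f j) / ∏ j ∈ range N, g j
  have hgN : ∏ j ∈ range N, g j ≠ 0 := prod_ne_zero_iff.2 fun j hj => hg j (mem_range.1 hj)
  have heq : ∀ n ≥ N, c * ∏ j ∈ range n, g j = ∏ j ∈ range n, f j := by
    intro n hn
    have htail : ∏ j ∈ Ico N n, f j = ∏ j ∈ Ico N n, g j :=
      prod_congr rfl fun j hj => hfg j (mem_Ico.1 hj).1
    rw [← prod_range_mul_prod_Ico f hn, ← prod_range_mul_prod_Ico g hn, htail, ← mul_assoc,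
      div_mul_cancel₀ _ hgN]
  simpa using (h.const_mul c).congr' (eventually_atTop.2 ⟨N, heq⟩)

theorem hasSum_prod_of_nonneg {α β : Type*} {f : α × β → ℝ} {g : α → ℝ} {c : ℝ} (hf : 0 ≤ f)
    (hfib : ∀ a, HasSum (fun b => f (a, b)) (g a)) (hg : HasSum g c) : HasSum f c := by
  have hfs : Summable f := (summable_prod_of_nonneg hf).2
    ⟨fun a => (hfib a).summable, by simpa only [fun a => (hfib a).tsum_eq] using hg.summable⟩
  rw [hfs.hasSum_iff, hfs.tsum_prod' fun a => (hfib a).summable]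
  simpa only [fun a => (hfib a).tsum_eq] using hg.tsum_eq

theorem List.ofFn_snoc {α : Type*} {m : ℕ} (a : Fin m → α) (r : α) :
    List.ofFn (Fin.snoc a r : Fin (m + 1) → α) = List.ofFn a ++ [r] := by
  rw [List.ofFn_succ', List.concat_eq_append]
  simp

theorem hasSum_ofFn_of_hasSum_append {α : Type*} {J : List α → ℝ} (hJ : ∀ a, 0 ≤ J a)
    (h : ∀ a, HasSum (fun r => J (a ++ [r])) (J a)) :
    ∀ m, HasSum (fun a : Fin m → α => J (List.ofFn a)) (J [])
  | 0 => by simp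
  | m + 1 => by
      let e := (Equiv.prodComm _ _).trans (Fin.snocEquiv fun _ : Fin (m + 1) => α)
      rw [← e.hasSum_iff]
      refine hasSum_prod_of_nonneg (fun _ => hJ _) (fun a => ?_)
        (hasSum_ofFn_of_hasSum_append hJ h m)
      convert h (List.ofFn a) using 3 with r
      exact congrArg J (List.ofFn_snoc a r)

section UrnProcess

variable {W B : ℕ → ℝ} {s : ℝ}

theorem blockProb_nonneg (hW : ∀ j, 0 ≤ W j) (hB : ∀ j, 0 ≤ B j) (r : ℕ) :
    0 ≤ blockProb W B r :=
  mul_nonneg (div_nonneg (hB r) (add_nonneg (hW r) (hB r)))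
    (prod_nonneg fun j _ => div_nonneg (hW j) (add_nonneg (hW j) (hB j)))

theorem updW_pos (hW : ∀ j, 0 < W j) (hs : 0 ≤ s) (r j : ℕ) : 0 < updW s W r j := by
  unfold updW; split_ifs <;> linarith [hW j]

theorem updB_pos (hB : ∀ j, 0 < B j) (hs : 0 ≤ s) (r j : ℕ) : 0 < updB s B r j := by
  unfold updB; split_ifs <;> linarith [hB j]

theorem updW_of_le {r j : ℕ} (h : r ≤ j) : updW s W r j = W j := if_neg h.not_gt

theorem updB_of_lt {r j : ℕ} (h : r < j) : updB s B r j = B j := if_neg h.ne'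

theorem jointXi_nonneg (hW : ∀ j, 0 < W j) (hB : ∀ j, 0 < B j) (hs : 0 ≤ s) (a : List ℕ) :
    0 ≤ jointXi s W B a := by
  induction a generalizing W B with
  | nil => exact zero_le_one
  | cons r a ih =>
    exact mul_nonneg (blockProb_nonneg (fun j => (hW j).le) (fun j => (hB j).le) r)
      (ih (updW_pos hW hs r) (updB_pos hB hs r))

theorem blockProb_eq_sub {r : ℕ} (hWB : W r + B r ≠ 0) :
    blockProb W B r =
      ∏ j ∈ range r, W j / (W j + B j) - ∏ j ∈ range (r + 1), W j / (W j + B j) := by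
  have hblack : B r / (W r + B r) = 1 - W r / (W r + B r) := by field_simp; ring
  rw [blockProb, prod_range_succ, hblack]
  ring

theorem hasSum_blockProb (hW : ∀ j, 0 < W j) (hB : ∀ j, 0 < B j)
    (hrec : Tendsto (fun n => ∏ j ∈ range n, W j / (W j + B j)) atTop (𝓝 0)) :
    HasSum (blockProb W B) 1 := by
  rw [hasSum_iff_tendsto_nat_of_nonneg
    (blockProb_nonneg (fun j => (hW j).le) (fun j => (hB j).le))]
  have hpartial : ∀ n, ∑ r ∈ range n, blockProb W B r = 1 - ∏ j ∈ range n, W j / (W j + B j) := by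
    intro n
    rw [sum_congr rfl fun r _ => blockProb_eq_sub (add_pos (hW r) (hB r)).ne', sum_range_sub',
      prod_range_zero]
  simp only [hpartial]
  simpa using tendsto_const_nhds.sub hrec

theorem tendsto_prod_upd (hW : ∀ j, 0 < W j) (hB : ∀ j, 0 < B j) (r : ℕ)
    (hrec : Tendsto (fun n => ∏ j ∈ range n, W j / (W j + B j)) atTop (𝓝 0)) :
    Tendsto (fun n => ∏ j ∈ range n, updW s W r j / (updW s W r j + updB s B r j))
      atTop (𝓝 0) :=
  tendsto_prod_range_zero_of_eq_of_le (N := r + 1)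
    (fun j hj => by rw [updW_of_le (by omega), updB_of_lt (by omega)])
    (fun j _ => (div_pos (hW j) (add_pos (hW j) (hB j))).ne') hrec

theorem hasSum_jointXi_append (hW : ∀ j, 0 < W j) (hB : ∀ j, 0 < B j) (hs : 0 ≤ s)
    (hrec : Tendsto (fun n => ∏ j ∈ range n, W j / (W j + B j)) atTop (𝓝 0)) (a : List ℕ) :
    HasSum (fun r => jointXi s W B (a ++ [r])) (jointXi s W B a) := by
  induction a generalizing W B with
  | nil => simpa [jointXi] using hasSum_blockProb hW hB hrec
  | cons q a ih =>
    exact (ih (updW_pos hW hs q) (updB_pos hB hs q) (tendsto_prod_upd hW hB q hrec)).mul_left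
      (blockProb W B q)

end UrnProcess

/-- If `∏_{j=0}^n w_j/(w_j+b_j) → 0`, the reinforced urn process is recurrent:
with probability one it returns to state 0 infinitely often. Equivalently,
given any observed past `a`, the next failure state `ξ` is finite almost surely
(its conditional law has total mass one), and consequently, for every `m`, the
first `m` failure states `ξ₁, …, ξ_m` are all finite with probability one. -/
theorem rup_recurrent (w b : ℕ → ℝ) (s : ℝ)
    (hw : ∀ j, 0 < w j) (hb : ∀ j, 0 < b j) (hs : 0 < s)
    (hrec : Filter.Tendsto (fun n => ∏ j ∈ range (n + 1), w j / (w j + b j))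
      Filter.atTop (nhds 0)) :
    (∀ a : List ℕ, ∑' r : ℕ, jointXi s w b (a ++ [r]) = jointXi s w b a) ∧
    (∀ m : ℕ, ∑' a : Fin m → ℕ, jointXi s w b (List.ofFn a) = 1) := by
  have happend := hasSum_jointXi_append hw hb hs.le ((tendsto_add_atTop_iff_nat 1).1 hrec)
  exact ⟨fun a => (happend a).tsum_eq,
    fun m => (hasSum_ofFn_of_hasSum_append (jointXi_nonneg hw hb hs.le) happend m).tsum_eq⟩
end

section
/- (Proposition 1, failure part) In the reinforced urn process, after observing the first m systems, the predictive probability that the (m+1)-th system fails at state r is P(ξ_{m+1} = r | ξ_1,…,ξ_m) = ((b_r + s d_r)/(w_r + s f_r + b_r + s d_r)) · ∏_{j=0}^{r-1} (w_j + s f_j)/(w_j + s f_j + b_j + s d_j), where f_l = #{p ≤ m : ξ_p > l} and d_l = #{p ≤ m : ξ_p = l}. -/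
open Finset

lemma jointXi_pos (s : ℝ) (hs : 0 < s) :
    ∀ (a : List ℕ) (W B : ℕ → ℝ), (∀ j, 0 < W j) → (∀ j, 0 < B j) →
      0 < jointXi s W B a := by
  intro a
  induction a with
  | nil => intro W B hW hB; simp [jointXi]
  | cons q a ih =>
    intro W B hW hB
    have hW' : ∀ j, 0 < updW s W q j := by
      intro j; unfold updW; split
      · linarith [hW j]
      · exact hW j
    have hB' : ∀ j, 0 < updB s B q j := by
      intro j; unfold updB; split
      · linarith [hB j]
      · exact hB j
    have hb : 0 < blockProb W B q := by
      unfold blockProb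
      have h1 : 0 < B q / (W q + B q) := div_pos (hB q) (by linarith [hW q, hB q])
      have h2 : 0 < ∏ j ∈ range q, W j / (W j + B j) :=
        Finset.prod_pos fun j _ => div_pos (hW j) (by linarith [hW j, hB j])
      exact mul_pos h1 h2
    exact mul_pos hb (ih _ _ hW' hB')

lemma blockProb_congr {W W' B B' : ℕ → ℝ} (hW : W = W') (hB : B = B') (r : ℕ) :
    blockProb W B r = blockProb W' B' r := by subst hW hB; rfl

lemma jointXi_append (s : ℝ) :
    ∀ (a : List ℕ) (W B : ℕ → ℝ) (r : ℕ),
      jointXi s W B (a ++ [r]) =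
        jointXi s W B a *
          blockProb (fun j => W j + s * (a.countP fun p => j < p))
            (fun j => B j + s * a.count j) r := by
  intro a
  induction a with
  | nil =>
    intro W B r
    simp only [List.nil_append, jointXi, one_mul, mul_one]
    exact blockProb_congr (by funext j; simp) (by funext j; simp) r
  | cons q a ih =>
    intro W B r
    rw [List.cons_append]
    show blockProb W B q * jointXi s (updW s W q) (updB s B q) (a ++ [r]) =
      blockProb W B q * jointXi s (updW s W q) (updB s B q) a * _
    rw [ih, ← mul_assoc]
    congr 1
    refine blockProb_congr ?_ ?_ r
    · funext j
      simp only [updW, List.countP_cons]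
      by_cases h : j < q
      · simp [h]; ring
      · simp [h]
    · funext j
      simp only [updB, List.count_cons]
      by_cases h : j = q
      · subst h; simp; ring
      · simp [h, Ne.symm h]

/-- Proposition 1 (failure part): after observing `m` systems failing at the
states listed in `a`, the predictive probability that the next system fails at
state `r` is
`P(ξ_{m+1} = r | ξ₁,…,ξ_m) = ((b_r + s d_r)/(w_r + s f_r + b_r + s d_r)) ·
∏_{j<r} (w_j + s f_j)/(w_j + s f_j + b_j + s d_j)`,
where `f_l` counts the observed systems surviving past `l` and `d_l` those
failing at `l`. -/
theorem rup_predictive_failure (w b : ℕ → ℝ) (s : ℝ)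
    (hw : ∀ j, 0 < w j) (hb : ∀ j, 0 < b j) (hs : 0 < s)
    (hrec : Filter.Tendsto (fun n => ∏ j ∈ range (n + 1), w j / (w j + b j))
      Filter.atTop (nhds 0))
    (a : List ℕ) (r : ℕ)
    (f d : ℕ → ℕ)
    (hf : ∀ l, f l = a.countP fun p => l < p)
    (hd : ∀ l, d l = a.count l) :
    jointXi s w b (a ++ [r]) / jointXi s w b a =
      ((b r + s * d r) / (w r + s * f r + (b r + s * d r))) *
        ∏ j ∈ range r, (w j + s * f j) / (w j + s * f j + (b j + s * d j)) := by
  have hpos : 0 < jointXi s w b a := jointXi_pos s hs a w b hw hb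
  rw [jointXi_append s a w b r, mul_comm, mul_div_assoc, div_self (ne_of_gt hpos), mul_one]
  unfold blockProb
  congr 1
  · rw [hd r, hf r]
  · refine Finset.prod_congr rfl fun j _ => ?_
    rw [hd j, hf j]
end

section
/- In the reinforced urn process, the joint law of the first m failure states has the explicit product form P(ξ_1 = a_1,…,ξ_m = a_m) = ∏_{l≥0} [∏_{i=0}^{d_l - 1}(b_l + s i) · ∏_{i=0}^{f_l - 1}(w_l + s i)] / ∏_{i=0}^{d_l + f_l - 1}(w_l + b_l + s i), where d_l = #{p ≤ m : a_p = l} and f_l = #{p ≤ m : a_p > l} (each factor equals 1 for all but finitely many l); in particular the joint law depends on (a_1,…,a_m) only through the counts (d_l, f_l), so the sequence (ξ_i)_{i≥1} is exchangeable. -/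
/-!
Within one 0-block every urn is sampled at most once, so a block ending at `r` contributes a
white draw from each urn `l < r` and a black draw from urn `r` (`blockFactor`). Over `m` blocks,
urn `l` therefore produces `d_l` black and `f_l` white draws, and since the urns are reinforced
independently, the joint law is the product over `l` of the Pólya probability of urn `l`'s
sequence of draws. That probability depends only on the counts, which are invariant under
permuting the failure states.
-/

open Finset

/-- The probability that a Pólya urn with `w` white and `b` black balls and reinforcement `s`
produces one fixed sequence of `d` black and `f` white draws, whatever their order. -/
noncomputable def polyaSeqProb (s w b : ℝ) (d f : ℕ) : ℝ :=
  ((∏ i ∈ range d, (b + s * i)) * ∏ i ∈ range f, (w + s * i)) /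
    ∏ i ∈ range (d + f), (w + b + s * i)

lemma prod_range_succ_add_mul (c s : ℝ) (n : ℕ) :
    ∏ i ∈ range (n + 1), (c + s * i) = c * ∏ i ∈ range n, (c + s + s * i) := by
  rw [prod_range_succ']
  push_cast
  rw [mul_zero, add_zero, mul_comm]
  congr 1
  exact prod_congr rfl fun i _ => by ring

@[simp]
lemma polyaSeqProb_zero_zero (s w b : ℝ) : polyaSeqProb s w b 0 0 = 1 := by
  simp [polyaSeqProb]

lemma polyaSeqProb_succ_black (s w b : ℝ) (d f : ℕ) :
    polyaSeqProb s w b (d + 1) f = b / (w + b) * polyaSeqProb s w (b + s) d f := by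
  rw [polyaSeqProb, polyaSeqProb, Nat.add_right_comm, prod_range_succ_add_mul,
    prod_range_succ_add_mul, mul_assoc, mul_div_mul_comm]
  simp only [add_assoc]

lemma polyaSeqProb_succ_white (s w b : ℝ) (d f : ℕ) :
    polyaSeqProb s w b d (f + 1) = w / (w + b) * polyaSeqProb s (w + s) b d f := by
  rw [polyaSeqProb, polyaSeqProb, ← Nat.add_assoc, prod_range_succ_add_mul,
    prod_range_succ_add_mul, mul_left_comm, mul_div_mul_comm]
  simp only [add_right_comm w b s]

noncomputable def blockFactor (W B : ℕ → ℝ) (r l : ℕ) : ℝ :=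
  if l = r then B r / (W r + B r) else if l < r then W l / (W l + B l) else 1

lemma mulSupport_blockFactor_subset (W B : ℕ → ℝ) (r : ℕ) :
    Function.mulSupport (blockFactor W B r) ⊆ ↑(range (r + 1)) := by
  intro l hl
  by_contra hlr
  simp only [coe_range, Set.mem_Iio, not_lt, Nat.succ_le_iff] at hlr
  exact hl (by simp [blockFactor, hlr.ne', hlr.not_gt])

lemma finprod_blockFactor (W B : ℕ → ℝ) (r : ℕ) :
    ∏ᶠ l, blockFactor W B r l = blockProb W B r := by
  rw [finprod_eq_prod_of_mulSupport_subset _ (mulSupport_blockFactor_subset W B r),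
    prod_range_succ, blockProb, mul_comm]
  congr 1
  · simp [blockFactor]
  · exact prod_congr rfl fun l hl => by simp [blockFactor, (mem_range.1 hl).ne, mem_range.1 hl]

noncomputable def productFormFactor (s : ℝ) (W B : ℕ → ℝ) (a : List ℕ) (l : ℕ) : ℝ :=
  polyaSeqProb s (W l) (B l) (a.count l) (a.countP fun p => l < p)

lemma mulSupport_productFormFactor_subset (s : ℝ) (W B : ℕ → ℝ) (a : List ℕ) :
    Function.mulSupport (productFormFactor s W B a) ⊆ ↑(range (a.sum + 1)) := by
  intro l hl
  by_contra hla
  simp only [coe_range, Set.mem_Iio, not_lt, Nat.succ_le_iff] at hla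
  have hlt : ∀ p ∈ a, p < l := fun p hp => (List.le_sum_of_mem hp).trans_lt hla
  have hd : a.count l = 0 := List.count_eq_zero.2 fun hl' => (hlt l hl').false
  have hf : (a.countP fun p => l < p) = 0 :=
    List.countP_eq_zero.2 fun p hp => by simpa using (hlt p hp).le
  exact hl (by simp [productFormFactor, hd, hf])

lemma productFormFactor_cons (s : ℝ) (W B : ℕ → ℝ) (r : ℕ) (a : List ℕ) (l : ℕ) :
    productFormFactor s W B (r :: a) l =
      blockFactor W B r l * productFormFactor s (updW s W r) (updB s B r) a l := by
  simp only [productFormFactor, blockFactor, updW, updB, List.count_cons, List.countP_cons,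
    beq_iff_eq]
  rcases lt_trichotomy l r with hlr | rfl | hrl
  · simp [hlr, hlr.ne, hlr.ne', polyaSeqProb_succ_white]
  · simp [polyaSeqProb_succ_black]
  · simp [hrl.ne, hrl.ne', hrl.not_gt]

theorem jointXi_eq_finprod_productFormFactor (s : ℝ) (W B : ℕ → ℝ) (a : List ℕ) :
    jointXi s W B a = ∏ᶠ l, productFormFactor s W B a l := by
  induction a generalizing W B with
  | nil => simp [jointXi, productFormFactor]
  | cons r a ih =>
    rw [jointXi, ih, ← finprod_blockFactor, ← finprod_mul_distrib
      ((finite_toSet _).subset (mulSupport_blockFactor_subset W B r))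
      ((finite_toSet _).subset (mulSupport_productFormFactor_subset s _ _ a))]
    exact finprod_congr fun l => (productFormFactor_cons s W B r a l).symm

theorem rup_joint_law_product_form_general (w b : ℕ → ℝ) (s : ℝ) :
    (∀ a : List ℕ,
      jointXi s w b a =
        ∏ᶠ l : ℕ,
          ((∏ i ∈ range (a.count l), (b l + s * i)) *
              ∏ i ∈ range (a.countP fun p => l < p), (w l + s * i)) /
            ∏ i ∈ range (a.count l + a.countP fun p => l < p),
              (w l + b l + s * i)) ∧
    (∀ a₁ a₂ : List ℕ, a₁.Perm a₂ → jointXi s w b a₁ = jointXi s w b a₂) := by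
  refine ⟨jointXi_eq_finprod_productFormFactor s w b, fun a₁ a₂ h => ?_⟩
  simp only [jointXi_eq_finprod_productFormFactor, productFormFactor, h.count_eq, h.countP_eq]

/-- The joint law of the first `m` failure states of the reinforced urn process
has the explicit product form
`P(ξ₁ = a₁,…,ξ_m = a_m) = ∏_{l≥0} [∏_{i<d_l}(b_l+si) ∏_{i<f_l}(w_l+si)] /
∏_{i<d_l+f_l}(w_l+b_l+si)` (a finitary product: all but finitely many factors
equal 1), where `d_l = #{p : a_p = l}` and `f_l = #{p : a_p > l}`. In
particular it depends on `(a₁,…,a_m)` only through the counts `(d_l, f_l)`, so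
the sequence `(ξ_i)` is exchangeable. -/
theorem rup_joint_law_product_form (w b : ℕ → ℝ) (s : ℝ)
    (hw : ∀ j, 0 < w j) (hb : ∀ j, 0 < b j) (hs : 0 < s)
    (hrec : Filter.Tendsto (fun n => ∏ j ∈ range (n + 1), w j / (w j + b j))
      Filter.atTop (nhds 0)) :
    (∀ a : List ℕ,
      jointXi s w b a =
        ∏ᶠ l : ℕ,
          ((∏ i ∈ range (a.count l), (b l + s * i)) *
              ∏ i ∈ range (a.countP fun p => l < p), (w l + s * i)) /
            ∏ i ∈ range (a.count l + a.countP fun p => l < p),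
              (w l + b l + s * i)) ∧
    (∀ a₁ a₂ : List ℕ, a₁.Perm a₂ → jointXi s w b a₁ = jointXi s w b a₂) :=
  rup_joint_law_product_form_general w b s
end

section
/- Let (Y_j)_{j≥0} be independent random variables with Y_j ~ Beta(b_j/s, w_j/s), where (w_j), (b_j) are positive reals and s > 0. If ∏_{j=0}^n w_j/(w_j + b_j) → 0 as n → ∞, then ∏_{j=0}^n (1 - Y_j) → 0 almost surely; equivalently, the random function F(r) = 1 - ∏_{j=0}^{r}(1 - Y_j) is almost surely a proper cumulative distribution function on {0,1,2,…} (nondecreasing with limit 1). -/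
/-!
The factors `1 - Y j` are independent and almost surely lie in `[0, 1]`, so the partial products
`∏_{j ≤ n} (1 - Y j)` decrease almost surely, while by independence their expectations are
`∏_{j ≤ n} w j / (w j + b j) → 0`. A decreasing nonnegative sequence whose integrals tend to `0`
tends to `0` almost everywhere, by monotone convergence.
-/

open Finset MeasureTheory ProbabilityTheory

/-- The Beta function `B(a,b) = Γ(a)Γ(b)/Γ(a+b)`. -/
noncomputable def betaFn (a b : ℝ) : ℝ :=
  Real.Gamma a * Real.Gamma b / Real.Gamma (a + b)

/-- The Beta(a,b) probability measure on `[0,1]`, given by the density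
`θ^(a-1) (1-θ)^(b-1) / B(a,b)` with respect to Lebesgue measure. -/
noncomputable def betaMeasure' (a b : ℝ) : Measure ℝ :=
  (volume.restrict (Set.Ioo (0 : ℝ) 1)).withDensity
    fun θ => ENNReal.ofReal (θ ^ (a - 1) * (1 - θ) ^ (b - 1) / betaFn a b)

open Filter Topology

lemma betaFn_pos {a b : ℝ} (ha : 0 < a) (hb : 0 < b) : 0 < betaFn a b :=
  div_pos (mul_pos (Real.Gamma_pos_of_pos ha) (Real.Gamma_pos_of_pos hb))
    (Real.Gamma_pos_of_pos (add_pos ha hb))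

lemma betaFn_add_one_right {a b : ℝ} (ha : 0 < a) (hb : 0 < b) :
    betaFn a (b + 1) = betaFn a b * (b / (a + b)) := by
  have hab := (add_pos ha hb).ne'
  rw [betaFn, betaFn, Real.Gamma_add_one hb.ne', ← add_assoc, Real.Gamma_add_one hab]
  field_simp

lemma setIntegral_Ioo_rpow_mul_one_sub_rpow {a b : ℝ} (ha : 0 < a) (hb : 0 < b) :
    ∫ x in Set.Ioo (0 : ℝ) 1, x ^ (a - 1) * (1 - x) ^ (b - 1) = betaFn a b := by
  have hGamma := Complex.Gamma_mul_Gamma_eq_betaIntegral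
    (s := (a : ℂ)) (t := (b : ℂ)) (by simpa using ha) (by simpa using hb)
  have hbeta : Complex.betaIntegral a b =
      ((∫ x in Set.Ioo (0 : ℝ) 1, x ^ (a - 1) * (1 - x) ^ (b - 1) : ℝ) : ℂ) := by
    rw [Complex.betaIntegral, intervalIntegral.integral_of_le zero_le_one,
      integral_Ioc_eq_integral_Ioo, ← integral_complex_ofReal]
    refine setIntegral_congr_fun measurableSet_Ioo fun x ⟨hx0, hx1⟩ => ?_
    rw [Complex.ofReal_mul, Complex.ofReal_cpow hx0.le, Complex.ofReal_cpow (by linarith)]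
    push_cast
    rfl
  rw [hbeta, ← Complex.ofReal_add, Complex.Gamma_ofReal, Complex.Gamma_ofReal,
    Complex.Gamma_ofReal, ← Complex.ofReal_mul, ← Complex.ofReal_mul, Complex.ofReal_inj]
    at hGamma
  rw [betaFn, hGamma, mul_div_cancel_left₀ _ (Real.Gamma_pos_of_pos (add_pos ha hb)).ne']

lemma ae_betaMeasure'_mem_Ioo (a b : ℝ) : ∀ᵐ x ∂betaMeasure' a b, x ∈ Set.Ioo (0 : ℝ) 1 :=
  (withDensity_absolutelyContinuous _ _).ae_le (ae_restrict_mem measurableSet_Ioo)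

lemma integral_one_sub_betaMeasure' {a b : ℝ} (ha : 0 < a) (hb : 0 < b) :
    ∫ x, (1 - x) ∂betaMeasure' a b = b / (a + b) := by
  have hB := betaFn_pos ha hb
  rw [betaMeasure', integral_withDensity_eq_integral_toReal_smul (by fun_prop)
    (ae_of_all _ fun _ => ENNReal.ofReal_lt_top)]
  calc ∫ x in Set.Ioo (0 : ℝ) 1,
        (ENNReal.ofReal (x ^ (a - 1) * (1 - x) ^ (b - 1) / betaFn a b)).toReal • (1 - x)
      = ∫ x in Set.Ioo (0 : ℝ) 1, (betaFn a b)⁻¹ * (x ^ (a - 1) * (1 - x) ^ (b + 1 - 1)) := by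
        refine setIntegral_congr_fun measurableSet_Ioo fun x ⟨hx0, hx1⟩ => ?_
        have h1x : 0 < 1 - x := by linarith
        rw [ENNReal.toReal_ofReal (by positivity), smul_eq_mul, add_sub_cancel_right,
          ← sub_add_cancel b 1, Real.rpow_add h1x, Real.rpow_one, add_sub_cancel_right]
        field_simp
    _ = b / (a + b) := by
        rw [integral_const_mul, setIntegral_Ioo_rpow_mul_one_sub_rpow ha (by linarith),
          betaFn_add_one_right ha hb]
        field_simp

section
variable {R : Type*} [CommSemiring R] [PartialOrder R] [IsOrderedRing R]

lemma antitone_prod_range_of_mem_Icc {x : ℕ → R} (hx : ∀ j, x j ∈ Set.Icc 0 1) :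
    Antitone fun n => ∏ j ∈ range n, x j :=
  antitone_nat_of_succ_le fun n => by
    rw [prod_range_succ]
    exact mul_le_of_le_one_right (prod_nonneg fun j _ => (hx j).1) (hx n).2

lemma prod_mem_Icc_zero_one {ι : Type*} {s : Finset ι} {x : ι → R}
    (hx : ∀ j ∈ s, x j ∈ Set.Icc 0 1) : ∏ j ∈ s, x j ∈ Set.Icc 0 1 :=
  ⟨prod_nonneg fun j hj => (hx j hj).1,
    prod_le_one (fun j hj => (hx j hj).1) fun j hj => (hx j hj).2⟩

end

section
variable {Ω ι : Type*} {mΩ : MeasurableSpace Ω} {P : Measure Ω}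

lemma ProbabilityTheory.iIndepFun.integral_finsetProd_eq_prod_integral {X : ι → Ω → ℝ}
    (hX : iIndepFun X P) (mX : ∀ i, AEStronglyMeasurable (X i) P) (s : Finset ι) :
    ∫ ω, ∏ i ∈ s, X i ω ∂P = ∏ i ∈ s, ∫ ω, X i ω ∂P := by
  simp only [← prod_coe_sort s]
  exact (hX.precomp Subtype.val_injective).integral_fun_prod_eq_prod_integral fun i => mX i

theorem ae_tendsto_prod_range_zero_of_iIndepFun {X : ℕ → Ω → ℝ} (hX : iIndepFun X P)
    (mX : ∀ j, AEStronglyMeasurable (X j) P) (hX01 : ∀ j, ∀ᵐ ω ∂P, X j ω ∈ Set.Icc 0 1)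
    (hmean : Tendsto (fun n => ∏ j ∈ range n, ∫ ω, X j ω ∂P) atTop (𝓝 0)) :
    ∀ᵐ ω ∂P, Tendsto (fun n => ∏ j ∈ range n, X j ω) atTop (𝓝 0) := by
  have := hX.isProbabilityMeasure
  have hall : ∀ᵐ ω ∂P, ∀ j, X j ω ∈ Set.Icc 0 1 := ae_all_iff.2 hX01
  have hprod : ∀ n, ∀ᵐ ω ∂P, ∏ j ∈ range n, X j ω ∈ Set.Icc 0 1 := fun n => by
    filter_upwards [hall] with ω hω using prod_mem_Icc_zero_one fun j _ => hω j
  have hint : ∀ n, Integrable (fun ω => ∏ j ∈ range n, X j ω) P := fun n =>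
    .of_bound (Finset.aestronglyMeasurable_fun_prod _ fun j _ => mX j) 1 <| by
      filter_upwards [hprod n] with ω hω
      exact (Real.norm_of_nonneg hω.1).trans_le hω.2
  refine tendsto_of_integral_tendsto_of_antitone hint (integrable_zero _ _ _) ?_ ?_ ?_
  · simpa only [hX.integral_finsetProd_eq_prod_integral mX, Pi.zero_apply, integral_zero]
      using hmean
  · filter_upwards [hall] with ω hω using antitone_prod_range_of_mem_Icc hω
  · filter_upwards [hall] with ω hω n using (prod_mem_Icc_zero_one fun j _ => hω j).1

end

theorem beta_stacy_proper_cdf_general (w b : ℕ → ℝ) (s : ℝ)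
    (hw : ∀ j, 0 < w j) (hb : ∀ j, 0 < b j) (hs : 0 < s)
    {Ω : Type*} {mΩ : MeasurableSpace Ω} {P : Measure Ω}
    (Y : ℕ → Ω → ℝ) (hYmeas : ∀ j, Measurable (Y j))
    (hYindep : iIndepFun Y P)
    (hYlaw : ∀ j, Measure.map (Y j) P = betaMeasure' (b j / s) (w j / s))
    (hrec : Filter.Tendsto (fun n => ∏ j ∈ range (n + 1), w j / (w j + b j))
      Filter.atTop (nhds 0)) :
    ∀ᵐ ω ∂P,
      Filter.Tendsto (fun n => ∏ j ∈ range (n + 1), (1 - Y j ω))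
        Filter.atTop (nhds 0) ∧
      Monotone (fun r => 1 - ∏ j ∈ range (r + 1), (1 - Y j ω)) ∧
      Filter.Tendsto (fun r => 1 - ∏ j ∈ range (r + 1), (1 - Y j ω))
        Filter.atTop (nhds 1) := by
  have hX01 : ∀ j, ∀ᵐ ω ∂P, 1 - Y j ω ∈ Set.Icc 0 1 := fun j => by
    refine ae_of_ae_map (hYmeas j).aemeasurable (p := fun y => 1 - y ∈ Set.Icc 0 1) ?_
    filter_upwards [hYlaw j ▸ ae_betaMeasure'_mem_Ioo _ _] with y ⟨hy0, hy1⟩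
    exact ⟨by linarith, by linarith⟩
  have hmean : ∀ j, ∫ ω, 1 - Y j ω ∂P = w j / (w j + b j) := fun j => by
    rw [← integral_map (hYmeas j).aemeasurable (by fun_prop), hYlaw j,
      integral_one_sub_betaMeasure' (div_pos (hb j) hs) (div_pos (hw j) hs)]
    field_simp
    ring
  have hlim := ae_tendsto_prod_range_zero_of_iIndepFun
    (hYindep.comp (fun _ y => 1 - y) fun _ => by fun_prop)
    (fun j => ((hYmeas j).const_sub 1).aestronglyMeasurable) hX01
    ((tendsto_add_atTop_iff_nat 1).1 (by simpa only [Function.comp_apply, hmean] using hrec))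
  filter_upwards [hlim, ae_all_iff.2 hX01] with ω hω h01
  have hω' := (tendsto_add_atTop_iff_nat 1).2 hω
  refine ⟨hω', fun m n hmn => ?_, by simpa using hω'.const_sub 1⟩
  exact sub_le_sub_left (antitone_prod_range_of_mem_Icc h01 (by omega)) 1

/-- Let `(Y_j)` be independent with `Y_j ~ Beta(b_j/s, w_j/s)`. If
`∏_{j=0}^n w_j/(w_j+b_j) → 0`, then `∏_{j=0}^n (1 - Y_j) → 0` almost surely;
equivalently, `F(r) = 1 - ∏_{j=0}^r (1 - Y_j)` is almost surely a proper
cumulative distribution function on `{0,1,2,…}` (nondecreasing with limit 1). -/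
theorem beta_stacy_proper_cdf (w b : ℕ → ℝ) (s : ℝ)
    (hw : ∀ j, 0 < w j) (hb : ∀ j, 0 < b j) (hs : 0 < s)
    {Ω : Type*} {mΩ : MeasurableSpace Ω} {P : Measure Ω} [IsProbabilityMeasure P]
    (Y : ℕ → Ω → ℝ) (hYmeas : ∀ j, Measurable (Y j))
    (hYindep : iIndepFun Y P)
    (hYlaw : ∀ j, Measure.map (Y j) P = betaMeasure' (b j / s) (w j / s))
    (hrec : Filter.Tendsto (fun n => ∏ j ∈ range (n + 1), w j / (w j + b j))
      Filter.atTop (nhds 0)) :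
    ∀ᵐ ω ∂P,
      Filter.Tendsto (fun n => ∏ j ∈ range (n + 1), (1 - Y j ω))
        Filter.atTop (nhds 0) ∧
      Monotone (fun r => 1 - ∏ j ∈ range (r + 1), (1 - Y j ω)) ∧
      Filter.Tendsto (fun r => 1 - ∏ j ∈ range (r + 1), (1 - Y j ω))
        Filter.atTop (nhds 1) :=
  beta_stacy_proper_cdf_general w b s hw hb hs (mΩ := mΩ) Y hYmeas hYindep hYlaw hrec
end
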